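/- arXiv:2412.15434 — 2 statements merged into one kernel-verified Lean document; each statement's English description precedes it below -/
import Mathlib

section
/- Phase-gate and Pauli-gate elimination: for every 2×2 complex matrix U in the multiplicative submonoid of Matrix ℂ (Fin 2) (Fin 2) generated by {H, S, T}, there exist a complex number z with ‖z‖ = 1, a list L of matrices each of which is equal to H, T, or T†, and a matrix P ∈ {1, X, Y, Z}, such that U = z • (L.prod * P). -/
open Matrix

noncomputable def H : Matrix (Fin 2) (Fin 2) ℂ :=
  (1 / Real.sqrt 2 : ℂ) • !![1, 1; 1, -1]

noncomputable def S : Matrix (Fin 2) (Fin 2) ℂ := !![1, 0; 0, Complex.I]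

noncomputable def T : Matrix (Fin 2) (Fin 2) ℂ :=
  !![1, 0; 0, Complex.exp (Complex.I * Real.pi / 4)]

noncomputable def X : Matrix (Fin 2) (Fin 2) ℂ := !![0, 1; 1, 0]

noncomputable def Y : Matrix (Fin 2) (Fin 2) ℂ := !![0, -Complex.I; Complex.I, 0]

noncomputable def Z : Matrix (Fin 2) (Fin 2) ℂ := !![1, 0; 0, -1]



namespace PEaux

open Complex

noncomputable def e1 : ℂ := Complex.exp (Complex.I * Real.pi / 4)
noncomputable def e2 : ℂ := Complex.exp (-(Complex.I * Real.pi / 4))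

lemma e1_mul_e1 : e1 * e1 = Complex.I := by
  rw [e1, ← Complex.exp_add]
  have : Complex.I * Real.pi / 4 + Complex.I * Real.pi / 4 = (Real.pi/2 : ℝ) * Complex.I := by
    push_cast; ring
  rw [this, Complex.exp_mul_I]
  simp

lemma e1_mul_e2 : e1 * e2 = 1 := by
  rw [e1, e2, ← Complex.exp_add]; simp

lemma e2_mul_e1 : e2 * e1 = 1 := by rw [mul_comm]; exact e1_mul_e2

lemma norm_e1 : ‖e1‖ = 1 := by
  rw [e1]; simp [Complex.norm_exp]

lemma norm_e2 : ‖e2‖ = 1 := by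
  rw [e2]; simp [Complex.norm_exp]

lemma exp_cancel : Complex.exp (Complex.I * Real.pi / 4) *
    Complex.exp (-(Complex.I * Real.pi / 4)) = 1 := by
  rw [← Complex.exp_add]; simp

lemma Tc : Tᴴ = !![1, 0; 0, e2] := by
  ext i j
  fin_cases i <;> fin_cases j <;>
    simp [T, e2, conjTranspose_apply, ← Complex.exp_conj, map_div₀, Complex.conj_I]
  · congr 1
    rw [map_ofNat]
    ring

def Pset : Set (Matrix (Fin 2) (Fin 2) ℂ) := {1, X, Y, Z}

def IsG (A : Matrix (Fin 2) (Fin 2) ℂ) : Prop := A = H ∨ A = T ∨ A = Tᴴ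

lemma hG : IsG H := Or.inl rfl
lemma tG : IsG T := Or.inr (Or.inl rfl)
lemma tcG : IsG Tᴴ := Or.inr (Or.inr rfl)

-- commutation with H
lemma XH : X * H = H * Z := by
  ext i j
  fin_cases i <;> fin_cases j <;>
    simp [H, X, Z, Matrix.mul_apply, Fin.sum_univ_two]

lemma YH : Y * H = (-1 : ℂ) • (H * Y) := by
  ext i j
  fin_cases i <;> fin_cases j <;>
    simp [H, Y, Matrix.mul_apply, Fin.sum_univ_two] <;> ring

lemma ZH : Z * H = H * X := by
  ext i j
  fin_cases i <;> fin_cases j <;>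
    simp [H, X, Z, Matrix.mul_apply, Fin.sum_univ_two]

-- commutation with T and Tᴴ
lemma XT : X * T = e1 • (Tᴴ * X) := by
  rw [Tc]
  ext i j
  fin_cases i <;> fin_cases j <;>
    simp [T, X, e1, e2, Matrix.mul_apply, Fin.sum_univ_two, mul_comm, mul_left_comm, exp_cancel]

lemma XTc : X * Tᴴ = e2 • (T * X) := by
  rw [Tc]
  ext i j
  fin_cases i <;> fin_cases j <;>
    simp [T, X, e1, e2, Matrix.mul_apply, Fin.sum_univ_two, mul_comm, mul_left_comm, exp_cancel]

lemma YT : Y * T = e1 • (Tᴴ * Y) := by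
  rw [Tc]
  ext i j
  fin_cases i <;> fin_cases j <;>
    simp [T, Y, e1, e2, Matrix.mul_apply, Fin.sum_univ_two, mul_comm, mul_left_comm, exp_cancel]

lemma YTc : Y * Tᴴ = e2 • (T * Y) := by
  rw [Tc]
  ext i j
  fin_cases i <;> fin_cases j <;>
    simp [T, Y, e1, e2, Matrix.mul_apply, Fin.sum_univ_two, mul_comm, mul_left_comm, exp_cancel]
  rw [mul_assoc, exp_cancel, mul_one]

lemma ZT : Z * T = T * Z := by
  ext i j
  fin_cases i <;> fin_cases j <;>
    simp [T, Z, Matrix.mul_apply, Fin.sum_univ_two]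

lemma ZTc : Z * Tᴴ = Tᴴ * Z := by
  rw [Tc]
  ext i j
  fin_cases i <;> fin_cases j <;>
    simp [Z, e2, Matrix.mul_apply, Fin.sum_univ_two]

lemma S_eq : S = T * T := by
  have h := e1_mul_e1
  rw [e1] at h
  ext i j
  fin_cases i <;> fin_cases j <;>
    simp [S, T, Matrix.mul_apply, Fin.sum_univ_two, h]

-- Pauli products
lemma XX : X * X = 1 := by
  ext i j
  fin_cases i <;> fin_cases j <;> simp [X, Matrix.mul_apply, Fin.sum_univ_two, Matrix.one_apply]

lemma YY : Y * Y = 1 := by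
  ext i j
  fin_cases i <;> fin_cases j <;> simp [Y, Matrix.mul_apply, Fin.sum_univ_two, Matrix.one_apply]

lemma ZZ : Z * Z = 1 := by
  ext i j
  fin_cases i <;> fin_cases j <;> simp [Z, Matrix.mul_apply, Fin.sum_univ_two, Matrix.one_apply]

lemma XY : X * Y = Complex.I • Z := by
  ext i j
  fin_cases i <;> fin_cases j <;> simp [X, Y, Z, Matrix.mul_apply, Fin.sum_univ_two]

lemma XZ : X * Z = (-Complex.I) • Y := by
  ext i j
  fin_cases i <;> fin_cases j <;> simp [X, Y, Z, Matrix.mul_apply, Fin.sum_univ_two]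

lemma YX : Y * X = (-Complex.I) • Z := by
  ext i j
  fin_cases i <;> fin_cases j <;> simp [X, Y, Z, Matrix.mul_apply, Fin.sum_univ_two]

lemma YZ : Y * Z = Complex.I • X := by
  ext i j
  fin_cases i <;> fin_cases j <;> simp [X, Y, Z, Matrix.mul_apply, Fin.sum_univ_two]

lemma ZX : Z * X = Complex.I • Y := by
  ext i j
  fin_cases i <;> fin_cases j <;> simp [X, Y, Z, Matrix.mul_apply, Fin.sum_univ_two]

lemma ZY : Z * Y = (-Complex.I) • X := by
  ext i j
  fin_cases i <;> fin_cases j <;> simp [X, Y, Z, Matrix.mul_apply, Fin.sum_univ_two]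

lemma one_mem : (1 : Matrix (Fin 2) (Fin 2) ℂ) ∈ Pset := Or.inl rfl
lemma X_mem : X ∈ Pset := Or.inr (Or.inl rfl)
lemma Y_mem : Y ∈ Pset := Or.inr (Or.inr (Or.inl rfl))
lemma Z_mem : Z ∈ Pset := Or.inr (Or.inr (Or.inr rfl))

lemma norm_negI : ‖(-Complex.I : ℂ)‖ = 1 := by simp
lemma norm_neg1 : ‖(-1 : ℂ)‖ = 1 := by simp

lemma pauli_mul {P Q : Matrix (Fin 2) (Fin 2) ℂ} (hP : P ∈ Pset) (hQ : Q ∈ Pset) :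
    ∃ (w : ℂ) (R : Matrix (Fin 2) (Fin 2) ℂ), ‖w‖ = 1 ∧ R ∈ Pset ∧ P * Q = w • R := by
  rcases hP with rfl | rfl | rfl | rfl <;> rcases hQ with rfl | rfl | rfl | rfl
  · exact ⟨1, 1, norm_one, one_mem, by simp⟩
  · exact ⟨1, X, norm_one, X_mem, by simp⟩
  · exact ⟨1, Y, norm_one, Y_mem, by simp⟩
  · exact ⟨1, Z, norm_one, Z_mem, by simp⟩
  · exact ⟨1, X, norm_one, X_mem, by simp⟩
  · exact ⟨1, 1, norm_one, one_mem, by simp [XX]⟩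
  · exact ⟨Complex.I, Z, by simp, Z_mem, by simp [XY]⟩
  · exact ⟨-Complex.I, Y, norm_negI, Y_mem, by simp [XZ]⟩
  · exact ⟨1, Y, norm_one, Y_mem, by simp⟩
  · exact ⟨-Complex.I, Z, norm_negI, Z_mem, by simp [YX]⟩
  · exact ⟨1, 1, norm_one, one_mem, by simp [YY]⟩
  · exact ⟨Complex.I, X, by simp, X_mem, by simp [YZ]⟩
  · exact ⟨1, Z, norm_one, Z_mem, by simp⟩
  · exact ⟨Complex.I, Y, by simp, Y_mem, by simp [ZX]⟩
  · exact ⟨-Complex.I, X, norm_negI, X_mem, by simp [ZY]⟩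
  · exact ⟨1, 1, norm_one, one_mem, by simp [ZZ]⟩

lemma comm_gate {P g : Matrix (Fin 2) (Fin 2) ℂ} (hP : P ∈ Pset) (hg : IsG g) :
    ∃ (w : ℂ) (g' P' : Matrix (Fin 2) (Fin 2) ℂ),
      ‖w‖ = 1 ∧ IsG g' ∧ P' ∈ Pset ∧ P * g = w • (g' * P') := by
  rcases hP with rfl | rfl | rfl | rfl <;> rcases hg with rfl | rfl | rfl
  · exact ⟨1, H, 1, norm_one, hG, one_mem, by simp⟩
  · exact ⟨1, T, 1, norm_one, tG, one_mem, by simp⟩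
  · exact ⟨1, Tᴴ, 1, norm_one, tcG, one_mem, by simp⟩
  · exact ⟨1, H, Z, norm_one, hG, Z_mem, by simp [XH]⟩
  · exact ⟨e1, Tᴴ, X, norm_e1, tcG, X_mem, XT⟩
  · exact ⟨e2, T, X, norm_e2, tG, X_mem, XTc⟩
  · exact ⟨-1, H, Y, norm_neg1, hG, Y_mem, YH⟩
  · exact ⟨e1, Tᴴ, Y, norm_e1, tcG, Y_mem, YT⟩
  · exact ⟨e2, T, Y, norm_e2, tG, Y_mem, YTc⟩
  · exact ⟨1, H, X, norm_one, hG, X_mem, by simp [ZH]⟩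
  · exact ⟨1, T, Z, norm_one, tG, Z_mem, by simp [ZT]⟩
  · exact ⟨1, Tᴴ, Z, norm_one, tcG, Z_mem, by simp [ZTc]⟩

lemma comm_list (L : List (Matrix (Fin 2) (Fin 2) ℂ)) (hL : ∀ A ∈ L, IsG A)
    {P : Matrix (Fin 2) (Fin 2) ℂ} (hP : P ∈ Pset) :
    ∃ (w : ℂ) (L' : List (Matrix (Fin 2) (Fin 2) ℂ)) (P' : Matrix (Fin 2) (Fin 2) ℂ),
      ‖w‖ = 1 ∧ (∀ A ∈ L', IsG A) ∧ P' ∈ Pset ∧ P * L.prod = w • (L'.prod * P') := by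
  induction L generalizing P with
  | nil => exact ⟨1, [], P, norm_one, by simp, hP, by simp⟩
  | cons g L ih =>
    obtain ⟨w1, g', P1, hw1, hg', hP1, hcomm⟩ := comm_gate hP (hL g (by simp))
    obtain ⟨w2, L', P', hw2, hL', hP', hrec⟩ := ih (fun A hA => hL A (by simp [hA])) hP1
    refine ⟨w1 * w2, g' :: L', P', by rw [norm_mul, hw1, hw2, one_mul],
      ?_, hP', ?_⟩
    · intro A hA
      rcases List.mem_cons.mp hA with rfl | hA
      · exact hg'
      · exact hL' A hA
    · calc P * (g :: L).prod = (P * g) * L.prod := by rw [List.prod_cons, mul_assoc]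
        _ = (w1 • (g' * P1)) * L.prod := by rw [hcomm]
        _ = w1 • (g' * (P1 * L.prod)) := by rw [smul_mul_assoc, mul_assoc]
        _ = w1 • (g' * (w2 • (L'.prod * P'))) := by rw [hrec]
        _ = (w1 * w2) • ((g' :: L').prod * P') := by
            rw [mul_smul_comm, smul_smul, List.prod_cons, mul_assoc]

end PEaux

theorem phase_and_pauli_elimination
    (U : Matrix (Fin 2) (Fin 2) ℂ)
    (hU : U ∈ Submonoid.closure ({H, S, T} : Set (Matrix (Fin 2) (Fin 2) ℂ))) :
    ∃ (z : ℂ) (L : List (Matrix (Fin 2) (Fin 2) ℂ)) (P : Matrix (Fin 2) (Fin 2) ℂ),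
      ‖z‖ = 1 ∧
      (∀ A ∈ L, A = H ∨ A = T ∨ A = Tᴴ) ∧
      P ∈ ({1, X, Y, Z} : Set (Matrix (Fin 2) (Fin 2) ℂ)) ∧
      U = z • (L.prod * P) := by
  open PEaux in
  induction hU using Submonoid.closure_induction with
  | mem x hx =>
    rcases hx with rfl | rfl | rfl
    · exact ⟨1, [H], 1, norm_one, by simp [hG], one_mem, by simp⟩
    · exact ⟨1, [T, T], 1, norm_one, by simp [tG], one_mem, by simp [S_eq]⟩
    · exact ⟨1, [T], 1, norm_one, by simp [tG], one_mem, by simp⟩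
  | one => exact ⟨1, [], 1, norm_one, by simp, one_mem, by simp⟩
  | mul x y hx hy ihx ihy =>
    obtain ⟨z1, L1, P1, hz1, hL1, hP1, hx1⟩ := ihx
    obtain ⟨z2, L2, P2, hz2, hL2, hP2, hy1⟩ := ihy
    obtain ⟨w, L2p, P1p, hw, hL2p, hP1p, hc⟩ := comm_list L2 hL2 hP1
    obtain ⟨v, R, hv, hR, hpp⟩ := pauli_mul hP1p hP2
    refine ⟨z1 * z2 * w * v, L1 ++ L2p, R, by
      rw [norm_mul, norm_mul, norm_mul, hz1, hz2, hw, hv]; ring, ?_, hR, ?_⟩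
    · intro A hA
      rcases List.mem_append.mp hA with h | h
      · exact hL1 A h
      · exact hL2p A h
    · have key : L1.prod * P1 * (L2.prod * P2) = (w * v) • ((L1 ++ L2p).prod * R) := by
        calc L1.prod * P1 * (L2.prod * P2)
            = L1.prod * ((P1 * L2.prod) * P2) := by noncomm_ring
          _ = L1.prod * ((w • (L2p.prod * P1p)) * P2) := by rw [hc]
          _ = w • (L1.prod * (L2p.prod * (P1p * P2))) := by
              rw [smul_mul_assoc, mul_smul_comm, mul_assoc L2p.prod]
          _ = w • (L1.prod * (L2p.prod * (v • R))) := by rw [hpp]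
          _ = (w * v) • ((L1 ++ L2p).prod * R) := by
              rw [mul_smul_comm, mul_smul_comm, smul_smul, List.prod_append, mul_assoc]
      rw [hx1, hy1, smul_mul_assoc, mul_smul_comm, smul_smul, key, smul_smul]
      congr 1
      ring
end

section
/- Clifford-reduced form after Hadamard elimination: for every 2×2 complex matrix U in the multiplicative submonoid of Matrix ℂ (Fin 2) (Fin 2) generated by {H, S, T}, there exist a complex number z with ‖z‖ = 1, a list L of matrices each of which is equal to T, T†, RX (π/4), or RX (-(π/4)), a Boolean ε, and a matrix P ∈ {1, X, Y, Z}, such that U = z • (L.prod * (if ε then H else 1) * P). Thus every single-qubit Clifford+T sequence equals, up to global phase, a sequence of π/4 rotations about the Z and X axes followed by at most one Hadamard gate and one Pauli gate. -/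
open Matrix

noncomputable def RX (θ : ℝ) : Matrix (Fin 2) (Fin 2) ℂ :=
  (Real.cos (θ / 2) : ℂ) • 1 - (Complex.I * Real.sin (θ / 2)) • X

noncomputable def ω : ℂ := Complex.exp (Complex.I * Real.pi / 4)
noncomputable def η : ℂ := Complex.exp (Complex.I * Real.pi / 8)

lemma norm_ω : ‖ω‖ = 1 := by
  simp [ω, Complex.norm_exp]
lemma norm_η : ‖η‖ = 1 := by
  simp [η, Complex.norm_exp]

lemma H_mul_H : H * H = 1 := by
  ext i j
  fin_cases i <;> fin_cases j <;>
    simp [H, Matrix.mul_apply, Fin.sum_univ_two, Matrix.one_apply] <;>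
    (field_simp; rw [← Complex.ofReal_pow, Real.sq_sqrt (by norm_num)]; norm_num)

lemma X_mul_H : X * H = H * Z := by
  ext i j
  fin_cases i <;> fin_cases j <;>
    simp [H, X, Z, Matrix.mul_apply, Fin.sum_univ_two]

lemma Z_mul_H : Z * H = H * X := by
  ext i j
  fin_cases i <;> fin_cases j <;>
    simp [H, X, Z, Matrix.mul_apply, Fin.sum_univ_two]

lemma Y_mul_H : Y * H = (-1 : ℂ) • (H * Y) := by
  ext i j
  fin_cases i <;> fin_cases j <;>
    simp [H, Y, Matrix.mul_apply, Fin.sum_univ_two] <;> ring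

lemma arg_eq : Complex.I * Real.pi / 4 = ((Real.pi / 4 : ℝ) : ℂ) * Complex.I := by
  push_cast; ring

lemma star_ω : star ω = Complex.exp (-(Complex.I * Real.pi / 4)) := by
  rw [ω, Complex.star_def, ← Complex.exp_conj, arg_eq, _root_.map_mul, Complex.conj_I,
    Complex.conj_ofReal]
  ring_nf

lemma ω_mul_star : ω * star ω = 1 := by
  rw [star_ω, ω, ← Complex.exp_add]
  simp

lemma ω_mul_conj : Complex.exp (Complex.I * Real.pi / 4) *
    (starRingEnd ℂ) (Complex.exp (Complex.I * Real.pi / 4)) = 1 := by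
  have h := ω_mul_star
  rw [ω, Complex.star_def] at h
  exact h

lemma exp_mul_exp_neg : Complex.exp (Complex.I * Real.pi / 4) *
    Complex.exp (-(Complex.I * Real.pi / 4)) = 1 := by
  rw [← Complex.exp_add]; simp

lemma Tct : Tᴴ = !![1, 0; 0, Complex.exp (-(Complex.I * Real.pi / 4))] := by
  have h := star_ω
  rw [ω] at h
  ext i j
  fin_cases i <;> fin_cases j <;>
    simp [T, Matrix.conjTranspose_apply, ← Complex.star_def, h]

lemma X_mul_T : X * T = ω • (Tᴴ * X) := by
  rw [Tct]
  ext i j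
  fin_cases i <;> fin_cases j <;>
    simp [T, X, ω, Complex.exp_neg, Matrix.mul_apply, Fin.sum_univ_two] <;>
    (first | ring | field_simp)

lemma Z_mul_T : Z * T = T * Z := by
  ext i j
  fin_cases i <;> fin_cases j <;>
    simp [T, Z, Matrix.mul_apply, Fin.sum_univ_two]

lemma Y_mul_T : Y * T = ω • (Tᴴ * Y) := by
  rw [Tct]
  ext i j
  fin_cases i <;> fin_cases j <;>
    simp [T, Y, ω, Complex.exp_neg, Matrix.mul_apply, Fin.sum_univ_two] <;>
    (first | ring | field_simp)

noncomputable def ηc : ℂ := Complex.exp (-(Complex.I * Real.pi / 8))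

lemma norm_ηc : ‖ηc‖ = 1 := by
  simp [ηc, Complex.norm_exp]

lemma eta_eq : η = Complex.cos ((Real.pi : ℂ) / 8) +
    Complex.sin ((Real.pi : ℂ) / 8) * Complex.I := by
  rw [η, show Complex.I * (Real.pi : ℂ) / 8 = ((Real.pi : ℂ) / 8) * Complex.I by ring,
    Complex.exp_mul_I]

lemma etac_eq : ηc = Complex.cos ((Real.pi : ℂ) / 8) -
    Complex.sin ((Real.pi : ℂ) / 8) * Complex.I := by
  rw [ηc, show -(Complex.I * (Real.pi : ℂ) / 8) = (-((Real.pi : ℂ) / 8)) * Complex.I by ring,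
    Complex.exp_mul_I, Complex.cos_neg, Complex.sin_neg]
  ring

lemma cs_sq : Complex.cos ((Real.pi : ℂ) / 8) ^ 2 + Complex.sin ((Real.pi : ℂ) / 8) ^ 2 = 1 :=
  Complex.cos_sq_add_sin_sq _

lemma eta_sq' : (Complex.cos ((Real.pi : ℂ) / 8) + Complex.sin ((Real.pi : ℂ) / 8) * Complex.I) *
    (Complex.cos ((Real.pi : ℂ) / 8) + Complex.sin ((Real.pi : ℂ) / 8) * Complex.I) =
    Complex.exp (Complex.I * Real.pi / 4) := by
  rw [← eta_eq, η, ← Complex.exp_add]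
  congr 1
  ring

lemma etac_sq' : (Complex.cos ((Real.pi : ℂ) / 8) - Complex.sin ((Real.pi : ℂ) / 8) * Complex.I) *
    (Complex.cos ((Real.pi : ℂ) / 8) - Complex.sin ((Real.pi : ℂ) / 8) * Complex.I) =
    Complex.exp (-(Complex.I * Real.pi / 4)) := by
  rw [← etac_eq, ηc, ← Complex.exp_add]
  congr 1
  ring

lemma H_mul_T : H * T = η • (RX (Real.pi / 4) * H) := by
  have harg : Real.pi / 4 / 2 = Real.pi / 8 := by ring
  ext i j
  fin_cases i <;> fin_cases j
  · simp [H, T, RX, X, harg, eta_eq, Matrix.mul_apply, Fin.sum_univ_two,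
      Matrix.one_apply, -Real.cos_pi_div_eight, -Real.sin_pi_div_eight]
    linear_combination (-((Real.sqrt 2 : ℂ))⁻¹) * cs_sq +
      ((Real.sqrt 2 : ℂ))⁻¹ * Complex.sin ((Real.pi : ℂ) / 8) ^ 2 * Complex.I_sq
  · simp [H, T, RX, X, harg, eta_eq, Matrix.mul_apply, Fin.sum_univ_two,
      Matrix.one_apply, -Real.cos_pi_div_eight, -Real.sin_pi_div_eight]
    linear_combination (-((Real.sqrt 2 : ℂ))⁻¹) * eta_sq'
  · simp [H, T, RX, X, harg, eta_eq, Matrix.mul_apply, Fin.sum_univ_two,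
      Matrix.one_apply, -Real.cos_pi_div_eight, -Real.sin_pi_div_eight]
    linear_combination (-((Real.sqrt 2 : ℂ))⁻¹) * cs_sq +
      ((Real.sqrt 2 : ℂ))⁻¹ * Complex.sin ((Real.pi : ℂ) / 8) ^ 2 * Complex.I_sq
  · simp [H, T, RX, X, harg, eta_eq, Matrix.mul_apply, Fin.sum_univ_two,
      Matrix.one_apply, -Real.cos_pi_div_eight, -Real.sin_pi_div_eight]
    linear_combination ((Real.sqrt 2 : ℂ))⁻¹ * eta_sq'

lemma H_mul_Tc : H * Tᴴ = ηc • (RX (-(Real.pi / 4)) * H) := by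
  have harg : -(Real.pi / 4) / 2 = -(Real.pi / 8) := by ring
  rw [Tct]
  ext i j
  fin_cases i <;> fin_cases j
  · simp [H, RX, X, harg, Real.cos_neg, Real.sin_neg, etac_eq, Matrix.mul_apply,
      Fin.sum_univ_two, Matrix.one_apply, -Real.cos_pi_div_eight, -Real.sin_pi_div_eight]
    linear_combination (-((Real.sqrt 2 : ℂ))⁻¹) * cs_sq +
      ((Real.sqrt 2 : ℂ))⁻¹ * Complex.sin ((Real.pi : ℂ) / 8) ^ 2 * Complex.I_sq
  · simp [H, RX, X, harg, Real.cos_neg, Real.sin_neg, etac_eq, Matrix.mul_apply,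
      Fin.sum_univ_two, Matrix.one_apply, -Real.cos_pi_div_eight, -Real.sin_pi_div_eight]
    linear_combination (-((Real.sqrt 2 : ℂ))⁻¹) * etac_sq'
  · simp [H, RX, X, harg, Real.cos_neg, Real.sin_neg, etac_eq, Matrix.mul_apply,
      Fin.sum_univ_two, Matrix.one_apply, -Real.cos_pi_div_eight, -Real.sin_pi_div_eight]
    linear_combination (-((Real.sqrt 2 : ℂ))⁻¹) * cs_sq +
      ((Real.sqrt 2 : ℂ))⁻¹ * Complex.sin ((Real.pi : ℂ) / 8) ^ 2 * Complex.I_sq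
  · simp [H, RX, X, harg, Real.cos_neg, Real.sin_neg, etac_eq, Matrix.mul_apply,
      Fin.sum_univ_two, Matrix.one_apply, -Real.cos_pi_div_eight, -Real.sin_pi_div_eight]
    linear_combination ((Real.sqrt 2 : ℂ))⁻¹ * etac_sq'

lemma S_eq_T_mul_T : S = T * T := by
  have h : Complex.exp (Complex.I * Real.pi / 4) * Complex.exp (Complex.I * Real.pi / 4) =
      Complex.I := by
    rw [← Complex.exp_add,
      show Complex.I * (Real.pi : ℂ) / 4 + Complex.I * (Real.pi : ℂ) / 4
        = ((Real.pi / 2 : ℝ) : ℂ) * Complex.I by push_cast; ring,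
      Complex.exp_mul_I]
    simp
  ext i j
  fin_cases i <;> fin_cases j <;>
    simp [S, T, Matrix.mul_apply, Fin.sum_univ_two, h]

def Good (U : Matrix (Fin 2) (Fin 2) ℂ) : Prop :=
  ∃ (z : ℂ) (L : List (Matrix (Fin 2) (Fin 2) ℂ)) (ε : Bool)
    (P : Matrix (Fin 2) (Fin 2) ℂ),
    ‖z‖ = 1 ∧
    (∀ A ∈ L, A = T ∨ A = Tᴴ ∨ A = RX (Real.pi / 4) ∨ A = RX (-(Real.pi / 4))) ∧
    P ∈ ({1, X, Y, Z} : Set (Matrix (Fin 2) (Fin 2) ℂ)) ∧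
    U = z • (L.prod * (if ε then H else 1) * P)

lemma good_one : Good 1 := by
  refine ⟨1, [], false, 1, by simp, by simp, by simp, by simp⟩

lemma pauli_T {P : Matrix (Fin 2) (Fin 2) ℂ}
    (hP : P ∈ ({1, X, Y, Z} : Set (Matrix (Fin 2) (Fin 2) ℂ))) :
    ∃ (w : ℂ) (T' : Matrix (Fin 2) (Fin 2) ℂ),
      ‖w‖ = 1 ∧ (T' = T ∨ T' = Tᴴ) ∧ P * T = w • (T' * P) := by
  simp only [Set.mem_insert_iff, Set.mem_singleton_iff] at hP
  rcases hP with rfl | rfl | rfl | rfl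
  · exact ⟨1, T, by simp, Or.inl rfl, by simp⟩
  · exact ⟨ω, Tᴴ, norm_ω, Or.inr rfl, X_mul_T⟩
  · exact ⟨ω, Tᴴ, norm_ω, Or.inr rfl, Y_mul_T⟩
  · exact ⟨1, T, by simp, Or.inl rfl, by simp [Z_mul_T]⟩

lemma pauli_H {P : Matrix (Fin 2) (Fin 2) ℂ}
    (hP : P ∈ ({1, X, Y, Z} : Set (Matrix (Fin 2) (Fin 2) ℂ))) :
    ∃ (w : ℂ) (P' : Matrix (Fin 2) (Fin 2) ℂ),
      ‖w‖ = 1 ∧ P' ∈ ({1, X, Y, Z} : Set (Matrix (Fin 2) (Fin 2) ℂ)) ∧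
      P * H = w • (H * P') := by
  simp only [Set.mem_insert_iff, Set.mem_singleton_iff] at hP
  rcases hP with rfl | rfl | rfl | rfl
  · exact ⟨1, 1, by simp, by simp, by simp⟩
  · exact ⟨1, Z, by simp, by simp, by simp [X_mul_H]⟩
  · exact ⟨-1, Y, by simp, by simp, by simpa using Y_mul_H⟩
  · exact ⟨1, X, by simp, by simp, by simp [Z_mul_H]⟩

lemma H_mul_H' (B : Matrix (Fin 2) (Fin 2) ℂ) : H * (H * B) = B := by
  rw [← mul_assoc, H_mul_H, one_mul]

lemma H_mul_T' (B : Matrix (Fin 2) (Fin 2) ℂ) :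
    H * (T * B) = η • (RX (Real.pi / 4) * (H * B)) := by
  rw [← mul_assoc, H_mul_T, smul_mul_assoc, mul_assoc]

lemma H_mul_Tc' (B : Matrix (Fin 2) (Fin 2) ℂ) :
    H * (Tᴴ * B) = ηc • (RX (-(Real.pi / 4)) * (H * B)) := by
  rw [← mul_assoc, H_mul_Tc, smul_mul_assoc, mul_assoc]

lemma good_mul_T {U : Matrix (Fin 2) (Fin 2) ℂ} (h : Good U) : Good (U * T) := by
  obtain ⟨z, L, ε, P, hz, hL, hP, rfl⟩ := h
  obtain ⟨w, T', hw, hT', hc⟩ := pauli_T hP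
  have hmem : T' = T ∨ T' = Tᴴ ∨ T' = RX (Real.pi / 4) ∨ T' = RX (-(Real.pi / 4)) := by
    rcases hT' with rfl | rfl
    · exact Or.inl rfl
    · exact Or.inr (Or.inl rfl)
  cases ε with
  | false =>
    refine ⟨z * w, L ++ [T'], false, P, by rw [norm_mul, hz, hw, mul_one], ?_, hP, ?_⟩
    · intro A hA
      rcases List.mem_append.mp hA with hA | hA
      · exact hL A hA
      · simp only [List.mem_singleton] at hA
        subst hA
        exact hmem
    · simp only [if_neg (Bool.false_ne_true), List.prod_append, List.prod_cons,
        List.prod_nil, mul_one, smul_mul_assoc, mul_assoc, hc, mul_smul_comm,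
        smul_smul, one_mul]
  | true =>
    rcases hT' with rfl | rfl
    · refine ⟨z * w * η, L ++ [RX (Real.pi / 4)], true, P,
        by rw [norm_mul, norm_mul, hz, hw, norm_η, mul_one, mul_one], ?_, hP, ?_⟩
      · intro A hA
        rcases List.mem_append.mp hA with hA | hA
        · exact hL A hA
        · simp only [List.mem_singleton] at hA
          subst hA
          exact Or.inr (Or.inr (Or.inl rfl))
      · simp only [if_pos, List.prod_append, List.prod_cons, List.prod_nil, mul_one,
          smul_mul_assoc, mul_assoc, hc, mul_smul_comm, H_mul_T', smul_smul]
    · refine ⟨z * w * ηc, L ++ [RX (-(Real.pi / 4))], true, P,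
        by rw [norm_mul, norm_mul, hz, hw, norm_ηc, mul_one, mul_one], ?_, hP, ?_⟩
      · intro A hA
        rcases List.mem_append.mp hA with hA | hA
        · exact hL A hA
        · simp only [List.mem_singleton] at hA
          subst hA
          exact Or.inr (Or.inr (Or.inr rfl))
      · simp only [if_pos, List.prod_append, List.prod_cons, List.prod_nil, mul_one,
          smul_mul_assoc, mul_assoc, hc, mul_smul_comm, H_mul_Tc', smul_smul]

lemma good_mul_H {U : Matrix (Fin 2) (Fin 2) ℂ} (h : Good U) : Good (U * H) := by
  obtain ⟨z, L, ε, P, hz, hL, hP, rfl⟩ := h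
  obtain ⟨w, P', hw, hP', hc⟩ := pauli_H hP
  cases ε with
  | false =>
    refine ⟨z * w, L, true, P', by rw [norm_mul, hz, hw, mul_one], hL, hP', ?_⟩
    simp only [if_neg (Bool.false_ne_true), if_pos, smul_mul_assoc, mul_assoc, hc,
      mul_smul_comm, smul_smul, one_mul]
  | true =>
    refine ⟨z * w, L, false, P', by rw [norm_mul, hz, hw, mul_one], hL, hP', ?_⟩
    simp only [if_neg (Bool.false_ne_true), if_pos, smul_mul_assoc, mul_assoc, hc,
      mul_smul_comm, smul_smul, H_mul_H', one_mul]

lemma good_mul_S {U : Matrix (Fin 2) (Fin 2) ℂ} (h : Good U) : Good (U * S) := by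
  rw [S_eq_T_mul_T, ← mul_assoc]
  exact good_mul_T (good_mul_T h)

theorem clifford_reduced_form
    (U : Matrix (Fin 2) (Fin 2) ℂ)
    (hU : U ∈ Submonoid.closure ({H, S, T} : Set (Matrix (Fin 2) (Fin 2) ℂ))) :
    ∃ (z : ℂ) (L : List (Matrix (Fin 2) (Fin 2) ℂ)) (ε : Bool)
      (P : Matrix (Fin 2) (Fin 2) ℂ),
      ‖z‖ = 1 ∧
      (∀ A ∈ L, A = T ∨ A = Tᴴ ∨ A = RX (Real.pi / 4) ∨ A = RX (-(Real.pi / 4))) ∧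
      P ∈ ({1, X, Y, Z} : Set (Matrix (Fin 2) (Fin 2) ℂ)) ∧
      U = z • (L.prod * (if ε then H else 1) * P) := by
  suffices h : Good U from h
  induction hU using Submonoid.closure_induction_right with
  | one => exact good_one
  | mul_right x hx y hy ih =>
    simp only [Set.mem_insert_iff, Set.mem_singleton_iff] at hy
    rcases hy with rfl | rfl | rfl
    · exact good_mul_H ih
    · exact good_mul_S ih
    · exact good_mul_T ih
end
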